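/- arXiv:2601.16796 — 2 statements merged into one kernel-verified Lean document; each statement's English description precedes it below -/
import Mathlib

section
/- If f : [−1,1] → ℝ is of class C^6 with f⁽⁶⁾ ≥ 0 on [−1,1], then 0 ≤ ∫_{−1}^1 f(x) dx − G[f;−1,1] ≤ L[f;−1,1] − ∫_{−1}^1 f(x) dx, i.e., the Gauss error is bounded by the Lobatto error. -/
/-!
Both rules are exact for polynomials of degree at most 5, so by Peano's kernel theorem each error
`Q[f] - ∫ f` equals `∫ K(t) f⁽⁶⁾(t) dt`, where the kernel `K(t)` is the error of the rule on the
truncated power `(x - t)₊⁵ / 5!`. Since `f⁽⁶⁾ ≥ 0`, it suffices that `K_G ≤ 0` and `K_G + K_L ≥ 0`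
on `[-1, 1]`. Both kernels are even, and for `t ≥ 0` only the nodes to the right of `t` contribute:
`K_G ≤ 0` is then an AM–GM inequality, and `K_G + K_L ≥ 0` a one-variable polynomial inequality
once `√15 / 5` and `√5 / 5` are replaced by rational bounds.
-/

open MeasureTheory intervalIntegral

noncomputable def gaussQ (f : ℝ → ℝ) (a b : ℝ) : ℝ :=
  (b - a) / 18 * (5 * f ((5 + Real.sqrt 15) / 10 * a + (5 - Real.sqrt 15) / 10 * b)
    + 8 * f ((a + b) / 2)
    + 5 * f ((5 - Real.sqrt 15) / 10 * a + (5 + Real.sqrt 15) / 10 * b))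

noncomputable def lobattoQ (f : ℝ → ℝ) (a b : ℝ) : ℝ :=
  (b - a) / 12 * (f a + 5 * f ((5 + Real.sqrt 5) / 10 * a + (5 - Real.sqrt 5) / 10 * b)
    + 5 * f ((5 - Real.sqrt 5) / 10 * a + (5 + Real.sqrt 5) / 10 * b) + f b)

noncomputable def quadQ (f : ℝ → ℝ) (a b : ℝ) : ℝ :=
  3 / 4 * gaussQ f a b + 1 / 4 * lobattoQ f a b

open Set Nat Real

theorem posPart_pow_sub_posPart_neg_pow {R : Type*} [Ring R] [LinearOrder R] [IsOrderedRing R]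
    {n : ℕ} (hn : Odd n) (u : R) : u⁺ ^ n - (-u)⁺ ^ n = u ^ n := by
  rcases le_total 0 u with hu | hu
  · simp [posPart_eq_self.2 hu, posPart_eq_zero.2 (neg_nonpos.2 hu), hn.pos.ne']
  · simp [posPart_eq_zero.2 hu, posPart_eq_self.2 (neg_nonneg.2 hu), hn.neg_pow, hn.pos.ne']

/-- AM–GM for five copies of `u / 5` and one `v`. -/
theorem pow_five_mul_le_add_pow_six {u v : ℝ} (hu : 0 ≤ u) (hv : 0 ≤ v) :
    46656 * u ^ 5 * v ≤ 3125 * (u + v) ^ 6 := by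
  have hfactor : 3125 * (u + v) ^ 6 - 46656 * u ^ 5 * v = (u - 5 * v) ^ 2 *
      (3125 * u ^ 4 + 3344 * v * u ^ 3 + 2190 * v ^ 2 * u ^ 2 + 800 * v ^ 3 * u + 125 * v ^ 4) := by
    ring
  have : 0 ≤ (u - 5 * v) ^ 2 *
      (3125 * u ^ 4 + 3344 * v * u ^ 3 + 2190 * v ^ 2 * u ^ 2 + 800 * v ^ 3 * u + 125 * v ^ 4) := by
    positivity
  linarith

section Peano

variable {a b : ℝ} {n : ℕ} {f g : ℝ → ℝ}

theorem taylor_integral_remainder_Icc (hf : ContDiffOn ℝ (n + 1 : ℕ) f (Icc a b)) {x : ℝ}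
    (hx : x ∈ Icc a b) :
    f x = taylorWithinEval f n (Icc a b) a x +
      ∫ t in a..x, (x - t) ^ n / n ! * iteratedDerivWithin (n + 1) f (Icc a b) t := by
  rcases hx.1.eq_or_lt with rfl | hax
  · simp [taylorWithinEval_self]
  have hab : a < b := hax.trans_le hx.2
  have hn : ContDiffOn ℝ n f (Icc a b) := hf.of_le (by simp)
  have hderiv : ∀ t ∈ Ioo a x, HasDerivWithinAt (fun t => taylorWithinEval f n (Icc a b) t x)
      ((x - t) ^ n / n ! * iteratedDerivWithin (n + 1) f (Icc a b) t) (Ioi t) t := by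
    intro t ht
    have hd := taylorWithinEval_hasDerivAt_Ioo x hab ⟨ht.1, ht.2.trans_le hx.2⟩ hn
      ((hf.differentiableOn_iteratedDerivWithin (by exact_mod_cast Nat.lt_succ_self n)
        (uniqueDiffOn_Icc hab)).mono Ioo_subset_Icc_self)
    rw [smul_eq_mul, inv_mul_eq_div] at hd
    exact hd.hasDerivWithinAt
  have hint : IntervalIntegrable
      (fun t => (x - t) ^ n / n ! * iteratedDerivWithin (n + 1) f (Icc a b) t) volume a x :=
    (ContinuousOn.mul (by fun_prop) ((hf.continuousOn_iteratedDerivWithin le_rfl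
      (uniqueDiffOn_Icc hab)).mono (by rw [uIcc_of_le hax.le]; exact Icc_subset_Icc le_rfl hx.2))
      ).intervalIntegrable
  rw [integral_eq_sub_of_hasDeriv_right_of_le hax.le
    ((continuousOn_taylorWithinEval (uniqueDiffOn_Icc hab) hn).mono
      (Icc_subset_Icc le_rfl hx.2)) hderiv hint, taylorWithinEval_self]
  ring

theorem taylor_integral_remainder_posPart (hn : n ≠ 0) (hab : a < b)
    (hf : ContDiffOn ℝ (n + 1 : ℕ) f (Icc a b)) {x : ℝ} (hx : x ∈ Icc a b) :
    f x = taylorWithinEval f n (Icc a b) a x +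
      ∫ t in a..b, (x - t)⁺ ^ n / n ! * iteratedDerivWithin (n + 1) f (Icc a b) t := by
  set g := iteratedDerivWithin (n + 1) f (Icc a b)
  have hg : ContinuousOn g (Icc a b) :=
    hf.continuousOn_iteratedDerivWithin le_rfl (uniqueDiffOn_Icc hab)
  have hint : ∀ c d, Icc c d ⊆ Icc a b → c ≤ d →
      IntervalIntegrable (fun t => (x - t)⁺ ^ n / n ! * g t) volume c d := fun c d hcd hle =>
    (ContinuousOn.mul (by fun_prop) (hg.mono (by rwa [uIcc_of_le hle]))).intervalIntegrable
  rw [← integral_add_adjacent_intervals (hint a x (Icc_subset_Icc le_rfl hx.2) hx.1)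
    (hint x b (Icc_subset_Icc hx.1 le_rfl) hx.2), taylor_integral_remainder_Icc hf hx]
  have hleft : ∫ t in a..x, (x - t)⁺ ^ n / n ! * g t = ∫ t in a..x, (x - t) ^ n / n ! * g t :=
    integral_congr fun t ht => by
      rw [uIcc_of_le hx.1] at ht
      simp only [posPart_eq_self.2 (sub_nonneg.2 ht.2)]
  have hright : ∫ t in x..b, (x - t)⁺ ^ n / n ! * g t = 0 := by
    refine (integral_congr fun t ht => ?_).trans integral_zero
    rw [uIcc_of_le hx.2] at ht
    simp [posPart_eq_zero.2 (sub_nonpos.2 ht.1), hn]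
  rw [hleft, hright, add_zero]

theorem integral_posPart_sub_pow (hn : n ≠ 0) {t : ℝ} (ht : t ∈ Icc a b) :
    ∫ x in a..b, (x - t)⁺ ^ n = (b - t) ^ (n + 1) / (n + 1) := by
  have hint : ∀ c d, IntervalIntegrable (fun x => (x - t)⁺ ^ n) volume c d := fun c d =>
    (by fun_prop : Continuous fun x => (x - t)⁺ ^ n).intervalIntegrable c d
  rw [← integral_add_adjacent_intervals (hint a t) (hint t b)]
  have hleft : ∫ x in a..t, (x - t)⁺ ^ n = 0 := by
    refine (integral_congr fun x hx => ?_).trans integral_zero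
    rw [uIcc_of_le ht.1] at hx
    simp [posPart_eq_zero.2 (sub_nonpos.2 hx.2), hn]
  have hright : ∫ x in t..b, (x - t)⁺ ^ n = ∫ x in t..b, (x - t) ^ n :=
    integral_congr fun x hx => by
      rw [uIcc_of_le ht.2] at hx
      simp only [posPart_eq_self.2 (sub_nonneg.2 hx.1)]
  rw [hleft, hright, integral_comp_sub_right (· ^ n), integral_pow]
  simp

theorem intervalIntegral_integral_swap_of_continuousOn {c d : ℝ} (hab : a ≤ b) (hcd : c ≤ d)
    {F : ℝ → ℝ → ℝ} (hF : ContinuousOn (Function.uncurry F) (Icc a b ×ˢ Icc c d)) :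
    ∫ x in a..b, ∫ y in c..d, F x y = ∫ y in c..d, ∫ x in a..b, F x y := by
  simp only [integral_of_le hab, integral_of_le hcd]
  refine integral_integral_swap ?_
  rw [Measure.prod_restrict]
  exact (hF.integrableOn_compact (isCompact_Icc.prod isCompact_Icc)).mono_set
    (prod_mono Ioc_subset_Icc_self Ioc_subset_Icc_self)

theorem integral_integral_posPart_pow_mul (hn : n ≠ 0) (hab : a ≤ b)
    (hg : ContinuousOn g (Icc a b)) :
    ∫ x in a..b, ∫ t in a..b, (x - t)⁺ ^ n / n ! * g t =
      ∫ t in a..b, (b - t) ^ (n + 1) / (n + 1)! * g t := by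
  rw [intervalIntegral_integral_swap_of_continuousOn (F := fun x t => (x - t)⁺ ^ n / n ! * g t)
    hab hab (ContinuousOn.mul (by fun_prop) (hg.comp continuousOn_snd fun p hp => hp.2))]
  refine integral_congr fun t ht => ?_
  rw [uIcc_of_le hab] at ht
  simp only [intervalIntegral.integral_mul_const, intervalIntegral.integral_div,
    integral_posPart_sub_pow hn ht]
  push_cast [Nat.factorial_succ]
  field_simp

theorem continuous_taylorWithinEval (s : Set ℝ) (a : ℝ) :
    Continuous (taylorWithinEval f n s a) := by
  simp_rw [funext (taylor_within_apply f n s a)]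
  fun_prop

variable {ι : Type*} [Fintype ι] {w x : ι → ℝ}

/-- The rule `∑ i, w i * p (x i)` integrates each `(y - a) ^ k` with `k ≤ n` exactly over `[a, b]`,
hence every polynomial of degree at most `n`. -/
def IsExactToDegree (w x : ι → ℝ) (a b : ℝ) (n : ℕ) : Prop :=
  ∀ k ≤ n, ∑ i, w i * (x i - a) ^ k = (b - a) ^ (k + 1) / (k + 1)

theorem IsExactToDegree.sum_mul_taylorWithinEval (hQ : IsExactToDegree w x a b n) (s : Set ℝ) :
    ∑ i, w i * taylorWithinEval f n s a (x i) = ∫ y in a..b, taylorWithinEval f n s a y := by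
  simp_rw [taylor_within_apply, smul_eq_mul]
  rw [intervalIntegral.integral_finsetSum fun k _ =>
    (by fun_prop : Continuous _).intervalIntegrable _ _]
  simp_rw [Finset.mul_sum]
  rw [Finset.sum_comm]
  refine Finset.sum_congr rfl fun k hk => ?_
  have hmoment := hQ k (Nat.lt_succ_iff.1 (Finset.mem_range.1 hk))
  rw [intervalIntegral.integral_mul_const, intervalIntegral.integral_const_mul,
    integral_comp_sub_right (· ^ k), integral_pow, sub_self, zero_pow (Nat.succ_ne_zero k),
    sub_zero, ← hmoment, Finset.mul_sum, Finset.sum_mul]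
  refine Finset.sum_congr rfl fun i _ => ?_
  ring

/-- The error of the rule on the truncated power `y ↦ (y - t)₊ ^ n / n!`; the integral term is
`∫ y in a..b, (y - t)₊ ^ n / n!` for `t ∈ [a, b]`. -/
noncomputable def peanoKernel (w x : ι → ℝ) (b : ℝ) (n : ℕ) (t : ℝ) : ℝ :=
  ∑ i, w i * (x i - t)⁺ ^ n / (n ! : ℝ) - (b - t) ^ (n + 1) / (n + 1)!

theorem continuous_peanoKernel (b : ℝ) (n : ℕ) : Continuous (peanoKernel w x b n) := by
  unfold peanoKernel
  fun_prop

theorem intervalIntegrable_peanoKernel_mul (hab : a < b)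
    (hf : ContDiffOn ℝ (n + 1 : ℕ) f (Icc a b)) :
    IntervalIntegrable
      (fun t => peanoKernel w x b n t * iteratedDerivWithin (n + 1) f (Icc a b) t) volume a b :=
  ((continuous_peanoKernel b n).continuousOn.mul
    ((hf.continuousOn_iteratedDerivWithin le_rfl (uniqueDiffOn_Icc hab)).mono
      (uIcc_of_le hab.le).subset)).intervalIntegrable

theorem IsExactToDegree.sum_mul_sub_integral_eq (hQ : IsExactToDegree w x a b n) (hn : n ≠ 0)
    (hab : a < b) (hx : ∀ i, x i ∈ Icc a b) (hf : ContDiffOn ℝ (n + 1 : ℕ) f (Icc a b)) :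
    ∑ i, w i * f (x i) - ∫ y in a..b, f y =
      ∫ t in a..b, peanoKernel w x b n t * iteratedDerivWithin (n + 1) f (Icc a b) t := by
  set g := iteratedDerivWithin (n + 1) f (Icc a b)
  set T := taylorWithinEval f n (Icc a b) a
  have hg : ContinuousOn g (Icc a b) :=
    hf.continuousOn_iteratedDerivWithin le_rfl (uniqueDiffOn_Icc hab)
  have hint : ∀ {h : ℝ → ℝ}, Continuous h → IntervalIntegrable (fun t => h t * g t) volume a b :=
    fun hh => (hh.continuousOn.mul (hg.mono (uIcc_of_le hab.le).subset)).intervalIntegrable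
  have hnodes : ∑ i, w i * f (x i) = (∫ y in a..b, T y) +
      ∫ t in a..b, (∑ i, w i * (x i - t)⁺ ^ n / n !) * g t := by
    simp_rw [taylor_integral_remainder_posPart hn hab hf (hx _), mul_add, Finset.sum_add_distrib,
      hQ.sum_mul_taylorWithinEval, Finset.sum_mul]
    rw [intervalIntegral.integral_finsetSum fun i _ => hint (by fun_prop)]
    simp_rw [← intervalIntegral.integral_const_mul, mul_div_assoc, mul_assoc]
    rfl
  have hintegral : ∫ y in a..b, f y = (∫ y in a..b, T y) +
      ∫ t in a..b, (b - t) ^ (n + 1) / (n + 1)! * g t := by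
    rw [← integral_integral_posPart_pow_mul hn hab.le hg, ← sub_eq_iff_eq_add',
      ← intervalIntegral.integral_sub (hf.continuousOn.intervalIntegrable_of_Icc hab.le)
        ((continuous_taylorWithinEval _ _).intervalIntegrable _ _)]
    refine integral_congr fun y hy => ?_
    rw [uIcc_of_le hab.le] at hy
    exact sub_eq_of_eq_add' (taylor_integral_remainder_posPart hn hab hf hy)
  rw [hnodes, hintegral, add_sub_add_left_eq_sub, ← intervalIntegral.integral_sub
    (hint (by fun_prop)) (hint (by fun_prop))]
  simp_rw [← sub_mul]
  rfl

end Peano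

noncomputable def gaussWeights : Fin 3 → ℝ := ![5 / 9, 8 / 9, 5 / 9]

noncomputable def gaussNodes : Fin 3 → ℝ := ![-√15 / 5, 0, √15 / 5]

noncomputable def lobattoWeights : Fin 4 → ℝ := ![1 / 6, 5 / 6, 5 / 6, 1 / 6]

noncomputable def lobattoNodes : Fin 4 → ℝ := ![-1, -√5 / 5, √5 / 5, 1]

theorem gaussQ_eq_sum (f : ℝ → ℝ) :
    gaussQ f (-1) 1 = ∑ i, gaussWeights i * f (gaussNodes i) := by
  rw [gaussQ, show (5 + √15) / 10 * (-1) + (5 - √15) / 10 * 1 = -√15 / 5 by ring,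
    show (5 - √15) / 10 * (-1) + (5 + √15) / 10 * 1 = √15 / 5 by ring]
  simp only [Fin.sum_univ_three, gaussWeights, gaussNodes, Matrix.cons_val_zero,
    Matrix.cons_val_one, Matrix.cons_val]
  norm_num
  ring

theorem lobattoQ_eq_sum (f : ℝ → ℝ) :
    lobattoQ f (-1) 1 = ∑ i, lobattoWeights i * f (lobattoNodes i) := by
  rw [lobattoQ, show (5 + √5) / 10 * (-1) + (5 - √5) / 10 * 1 = -√5 / 5 by ring,
    show (5 - √5) / 10 * (-1) + (5 + √5) / 10 * 1 = √5 / 5 by ring]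
  simp only [Fin.sum_univ_four, lobattoWeights, lobattoNodes, Matrix.cons_val_zero,
    Matrix.cons_val_one, Matrix.cons_val]
  ring

theorem gaussNodes_mem_Icc (i : Fin 3) : gaussNodes i ∈ Icc (-1) 1 := by
  have h : √15 / 5 ≤ 1 := by
    rw [div_le_one (by norm_num), sqrt_le_left (by norm_num)]
    norm_num
  fin_cases i <;> simp only [gaussNodes, Fin.zero_eta, Fin.mk_one, Fin.reduceFinMk,
    Matrix.cons_val_zero, Matrix.cons_val_one, Matrix.cons_val, mem_Icc] <;>
    constructor <;> linarith [sqrt_nonneg 15]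

theorem lobattoNodes_mem_Icc (i : Fin 4) : lobattoNodes i ∈ Icc (-1) 1 := by
  have h : √5 / 5 ≤ 1 := by
    rw [div_le_one (by norm_num), sqrt_le_left (by norm_num)]
    norm_num
  fin_cases i <;> simp only [lobattoNodes, Fin.zero_eta, Fin.mk_one, Fin.reduceFinMk,
    Matrix.cons_val_zero, Matrix.cons_val_one, Matrix.cons_val, mem_Icc] <;>
    constructor <;> linarith [sqrt_nonneg 5]

theorem isExactToDegree_gauss : IsExactToDegree gaussWeights gaussNodes (-1) 1 5 := by
  have h2 : √15 ^ 2 = 15 := sq_sqrt (by norm_num)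
  have h4 : √15 ^ 4 = 225 := by rw [show √15 ^ 4 = (√15 ^ 2) ^ 2 by ring, h2]; norm_num
  intro k hk
  simp only [Fin.sum_univ_three, gaussWeights, gaussNodes, Matrix.cons_val_zero,
    Matrix.cons_val_one, Matrix.cons_val]
  interval_cases k <;> ring_nf <;> rw [h2] <;> try rw [h4]
  all_goals norm_num

theorem isExactToDegree_lobatto : IsExactToDegree lobattoWeights lobattoNodes (-1) 1 5 := by
  have h2 : √5 ^ 2 = 5 := sq_sqrt (by norm_num)
  have h4 : √5 ^ 4 = 25 := by rw [show √5 ^ 4 = (√5 ^ 2) ^ 2 by ring, h2]; norm_num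
  intro k hk
  simp only [Fin.sum_univ_four, lobattoWeights, lobattoNodes, Matrix.cons_val_zero,
    Matrix.cons_val_one, Matrix.cons_val]
  interval_cases k <;> ring_nf <;> rw [h2] <;> try rw [h4]
  all_goals norm_num

theorem peanoKernel_gauss_apply (t : ℝ) :
    peanoKernel gaussWeights gaussNodes 1 5 t =
      (5 * (-√15 / 5 - t)⁺ ^ 5 + 8 * (-t)⁺ ^ 5 + 5 * (√15 / 5 - t)⁺ ^ 5) / 1080 -
        (1 - t) ^ 6 / 720 := by
  simp only [peanoKernel, Fin.sum_univ_three, gaussWeights, gaussNodes, Matrix.cons_val_zero,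
    Matrix.cons_val_one, Matrix.cons_val, zero_sub]
  norm_num [factorial]
  ring

theorem peanoKernel_lobatto_apply (t : ℝ) :
    peanoKernel lobattoWeights lobattoNodes 1 5 t =
      ((-1 - t)⁺ ^ 5 + 5 * (-√5 / 5 - t)⁺ ^ 5 + 5 * (√5 / 5 - t)⁺ ^ 5 + (1 - t)⁺ ^ 5) / 720 -
        (1 - t) ^ 6 / 720 := by
  simp only [peanoKernel, Fin.sum_univ_four, lobattoWeights, lobattoNodes, Matrix.cons_val_zero,
    Matrix.cons_val_one, Matrix.cons_val]
  norm_num [factorial]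
  ring

/- Both kernels are even: by `posPart_pow_sub_posPart_neg_pow`, `K (-t) - K t` is a polynomial in
`t`, which vanishes because the nodes are symmetric and the rule is exact. -/
theorem peanoKernel_gauss_neg (t : ℝ) :
    peanoKernel gaussWeights gaussNodes 1 5 (-t) = peanoKernel gaussWeights gaussNodes 1 5 t := by
  have h2 : √15 ^ 2 = 15 := sq_sqrt (by norm_num)
  have odd5 : Odd 5 := by decide
  rw [peanoKernel_gauss_apply, peanoKernel_gauss_apply]
  linear_combination (norm := ring_nf)
    5 / 1080 * posPart_pow_sub_posPart_neg_pow odd5 (√15 / 5 + t)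
    + 5 / 1080 * posPart_pow_sub_posPart_neg_pow odd5 (t - √15 / 5)
    + 8 / 1080 * posPart_pow_sub_posPart_neg_pow odd5 t
    + (t ^ 3 / 270 + t * (√15 ^ 2 + 15) / 13500) * h2

theorem peanoKernel_lobatto_neg (t : ℝ) :
    peanoKernel lobattoWeights lobattoNodes 1 5 (-t) =
      peanoKernel lobattoWeights lobattoNodes 1 5 t := by
  have h2 : √5 ^ 2 = 5 := sq_sqrt (by norm_num)
  have odd5 : Odd 5 := by decide
  rw [peanoKernel_lobatto_apply, peanoKernel_lobatto_apply]
  linear_combination (norm := ring_nf)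
    1 / 720 * posPart_pow_sub_posPart_neg_pow odd5 (1 + t)
    + 1 / 720 * posPart_pow_sub_posPart_neg_pow odd5 (t - 1)
    + 5 / 720 * posPart_pow_sub_posPart_neg_pow odd5 (√5 / 5 + t)
    + 5 / 720 * posPart_pow_sub_posPart_neg_pow odd5 (t - √5 / 5)
    + (t ^ 3 / 180 + t * (√5 ^ 2 + 5) / 9000) * h2

theorem peanoKernel_gauss_nonpos_of_nonneg {t : ℝ} (ht : t ∈ Icc (0 : ℝ) 1) :
    peanoKernel gaussWeights gaussNodes 1 5 t ≤ 0 := by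
  rw [peanoKernel_gauss_apply, posPart_eq_zero.2 (neg_nonpos.2 ht.1),
    posPart_eq_zero.2 (show -√15 / 5 - t ≤ 0 by linarith [ht.1, sqrt_nonneg 15])]
  rcases le_total (√15 / 5) t with hc | hc
  · rw [posPart_eq_zero.2 (sub_nonpos.2 hc)]
    have : 0 ≤ (1 - t) ^ 6 := by positivity
    linarith
  · rw [posPart_eq_self.2 (sub_nonneg.2 hc), zero_pow (by norm_num)]
    set u := √15 / 5 - t
    have hu : 0 ≤ u := sub_nonneg.2 hc
    -- AM–GM with `v = 1 - √15 / 5` is just sharp enough: it needs `46656 / 3125 * v ≥ 10 / 3`.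
    have hv : 2233 / 10000 ≤ 1 - √15 / 5 := by
      have : √15 ≤ 38835 / 10000 := (sqrt_le_left (by norm_num)).2 (by norm_num)
      linarith
    have hamgm := pow_five_mul_le_add_pow_six hu (hv.trans' (by norm_num))
    rw [show u + (1 - √15 / 5) = 1 - t by ring] at hamgm
    have := mul_le_mul_of_nonneg_left hv (pow_nonneg hu 5)
    linarith [pow_nonneg hu 5]

theorem peanoKernel_gauss_add_lobatto_of_nonneg {t : ℝ} (ht : t ∈ Icc (0 : ℝ) 1) :
    peanoKernel gaussWeights gaussNodes 1 5 t + peanoKernel lobattoWeights lobattoNodes 1 5 t =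
      (5 / 9 * (√15 / 5 - t)⁺ ^ 5 + 5 / 6 * (√5 / 5 - t)⁺ ^ 5 + 1 / 6 * (1 - t) ^ 5 -
        1 / 3 * (1 - t) ^ 6) / 120 := by
  rw [peanoKernel_gauss_apply, peanoKernel_lobatto_apply, posPart_eq_zero.2 (neg_nonpos.2 ht.1),
    posPart_eq_zero.2 (show -√15 / 5 - t ≤ 0 by linarith [ht.1, sqrt_nonneg 15]),
    posPart_eq_zero.2 (show -√5 / 5 - t ≤ 0 by linarith [ht.1, sqrt_nonneg 5]),
    posPart_eq_zero.2 (show -1 - t ≤ 0 by linarith [ht.1]),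
    posPart_eq_self.2 (sub_nonneg.2 ht.2)]
  ring

theorem peanoKernel_gauss_add_lobatto_nonneg_of_nonneg {t : ℝ} (ht : t ∈ Icc (0 : ℝ) 1) :
    0 ≤ peanoKernel gaussWeights gaussNodes 1 5 t +
      peanoKernel lobattoWeights lobattoNodes 1 5 t := by
  rw [peanoKernel_gauss_add_lobatto_of_nonneg ht]
  refine div_nonneg ?_ (by norm_num)
  have hs : 387298 / 100000 ≤ √15 := (le_sqrt (by norm_num) (by norm_num)).2 (by norm_num)
  have hr₁ : 2236067 / 1000000 ≤ √5 := (le_sqrt (by norm_num) (by norm_num)).2 (by norm_num)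
  have hr₂ : √5 ≤ 223607 / 100000 := (sqrt_le_left (by norm_num)).2 (by norm_num)
  have hodd : Odd 5 := by decide
  rcases le_total (1 / 2) t with h₁ | h₁
  · have : 0 ≤ (1 - t) ^ 5 * (2 * t - 1) :=
      mul_nonneg (pow_nonneg (by linarith [ht.2]) 5) (by linarith)
    have : 0 ≤ (√15 / 5 - t)⁺ ^ 5 := by positivity
    have : 0 ≤ (√5 / 5 - t)⁺ ^ 5 := by positivity
    linarith
  have hs' := hodd.pow_le_pow.2 (show 77459 / 100000 - t ≤ √15 / 5 - t by linarith)
  rw [posPart_eq_self.2 (by linarith)]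
  rcases le_total (√5 / 5) t with h₂ | h₂
  · rw [posPart_eq_zero.2 (sub_nonpos.2 h₂)]
    have hpoly : 0 ≤ 5 / 9 * (77459 / 100000 - t) ^ 5 + 1 / 6 * (1 - t) ^ 5 -
        1 / 3 * (1 - t) ^ 6 := by
      nlinarith [mul_nonneg (show (0 : ℝ) ≤ t - 4472 / 10000 by linarith) (sub_nonneg.2 h₁),
        sq_nonneg (t - 1 / 2), sq_nonneg ((t - 1 / 2) * (t - 4472 / 10000)),
        sq_nonneg (t - 4472 / 10000)]
    linarith
  · rw [posPart_eq_self.2 (by linarith)]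
    have hr' := hodd.pow_le_pow.2 (show 447213 / 1000000 - t ≤ √5 / 5 - t by linarith)
    have ht₁ : t ≤ 4472140 / 10000000 := by linarith
    have hpoly : 0 ≤ 5 / 9 * (77459 / 100000 - t) ^ 5 + 5 / 6 * (447213 / 1000000 - t) ^ 5 +
        1 / 6 * (1 - t) ^ 5 - 1 / 3 * (1 - t) ^ 6 := by
      nlinarith [mul_nonneg ht.1 (sub_nonneg.2 ht₁), sq_nonneg t,
        sq_nonneg (t * (4472140 / 10000000 - t)), mul_nonneg (mul_nonneg ht.1 ht.1) ht.1,
        sq_nonneg (t ^ 2), sq_nonneg (t ^ 2 - t / 4), mul_nonneg (sq_nonneg t) (sub_nonneg.2 ht₁),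
        mul_nonneg (sq_nonneg (t * t)) (sub_nonneg.2 ht₁)]
    linarith

theorem peanoKernel_gauss_nonpos {t : ℝ} (ht : t ∈ Icc (-1 : ℝ) 1) :
    peanoKernel gaussWeights gaussNodes 1 5 t ≤ 0 := by
  rcases le_total 0 t with h | h
  · exact peanoKernel_gauss_nonpos_of_nonneg ⟨h, ht.2⟩
  · rw [← neg_neg t, peanoKernel_gauss_neg]
    exact peanoKernel_gauss_nonpos_of_nonneg ⟨neg_nonneg.2 h, by linarith [ht.1]⟩

theorem peanoKernel_gauss_add_lobatto_nonneg {t : ℝ} (ht : t ∈ Icc (-1 : ℝ) 1) :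
    0 ≤ peanoKernel gaussWeights gaussNodes 1 5 t +
      peanoKernel lobattoWeights lobattoNodes 1 5 t := by
  rcases le_total 0 t with h | h
  · exact peanoKernel_gauss_add_lobatto_nonneg_of_nonneg ⟨h, ht.2⟩
  · rw [← neg_neg t, peanoKernel_gauss_neg, peanoKernel_lobatto_neg]
    exact peanoKernel_gauss_add_lobatto_nonneg_of_nonneg ⟨neg_nonneg.2 h, by linarith [ht.1]⟩


theorem gauss_error_le_lobatto_error (f : ℝ → ℝ)
    (hf : ContDiffOn ℝ 6 f (Set.Icc (-1 : ℝ) 1))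
    (hpos : ∀ x ∈ Set.Icc (-1 : ℝ) 1, 0 ≤ iteratedDerivWithin 6 f (Set.Icc (-1 : ℝ) 1) x) :
    0 ≤ (∫ x in (-1 : ℝ)..1, f x) - gaussQ f (-1) 1 ∧
      (∫ x in (-1 : ℝ)..1, f x) - gaussQ f (-1) 1 ≤ lobattoQ f (-1) 1 - ∫ x in (-1 : ℝ)..1, f x := by
  have hG := isExactToDegree_gauss.sum_mul_sub_integral_eq (by norm_num) (by norm_num)
    gaussNodes_mem_Icc hf
  have hL := isExactToDegree_lobatto.sum_mul_sub_integral_eq (by norm_num) (by norm_num)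
    lobattoNodes_mem_Icc hf
  rw [← gaussQ_eq_sum] at hG
  rw [← lobattoQ_eq_sum] at hL
  set g := iteratedDerivWithin 6 f (Icc (-1 : ℝ) 1)
  constructor
  · have hGneg : ∫ t in (-1 : ℝ)..1, peanoKernel gaussWeights gaussNodes 1 5 t * g t ≤ 0 := by
      rw [← neg_nonneg, ← intervalIntegral.integral_neg]
      exact integral_nonneg (by norm_num) fun t ht =>
        neg_nonneg.2 (mul_nonpos_of_nonpos_of_nonneg (peanoKernel_gauss_nonpos ht) (hpos t ht))
    linarith
  · have hGL : 0 ≤ ∫ t in (-1 : ℝ)..1, (peanoKernel gaussWeights gaussNodes 1 5 t +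
        peanoKernel lobattoWeights lobattoNodes 1 5 t) * g t :=
      integral_nonneg (by norm_num) fun t ht =>
        mul_nonneg (peanoKernel_gauss_add_lobatto_nonneg ht) (hpos t ht)
    simp only [add_mul] at hGL
    rw [intervalIntegral.integral_add (intervalIntegrable_peanoKernel_mul (by norm_num) hf)
      (intervalIntegrable_peanoKernel_mul (by norm_num) hf)] at hGL
    linarith
end

section
/- For f : [a,b] → ℝ of class C^6, the composite three-point Gauss quadrature satisfies |∫_a^b f(x) dx − G_n[f;a,b]| ≤ (b−a)^7/(2016000 n^6) · sup_{x∈[a,b]} |f⁽⁶⁾(x)|. -/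
open MeasureTheory intervalIntegral

noncomputable def gaussC (n : ℕ) (f : ℝ → ℝ) (a b : ℝ) : ℝ :=
  ∑ k ∈ Finset.range n, gaussQ f (a + k * (b - a) / n) (a + (k + 1) * (b - a) / n)

noncomputable def lobattoC (n : ℕ) (f : ℝ → ℝ) (a b : ℝ) : ℝ :=
  ∑ k ∈ Finset.range n, lobattoQ f (a + k * (b - a) / n) (a + (k + 1) * (b - a) / n)

noncomputable def quadC (n : ℕ) (f : ℝ → ℝ) (a b : ℝ) : ℝ :=
  ∑ k ∈ Finset.range n, quadQ f (a + k * (b - a) / n) (a + (k + 1) * (b - a) / n)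

/-! The Peano kernel argument. The three-point Gauss rule integrates polynomials of degree `≤ 5`
exactly, so Taylor's formula with integral remainder on `[c, d]` gives
`∫ f - G[f; c, d] = ∫ K(t) f⁽⁶⁾(t) dt`, where `K(t)` is the quadrature error of
`x ↦ (x - t)₊⁵ / 5!`. On each half of `[c, d]` only the outer node on that side contributes to `K`,
and an AM-GM estimate shows `K ≥ 0`. Hence the error is at most `sup |f⁽⁶⁾| · ∫ K`, and `∫ K`
is the quadrature error of `(x - c)⁶ / 6!`, namely `(d - c)⁷ / 2016000`. Summing over the `n`
subintervals of length `(b - a) / n` gives the composite bound. -/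

open Set Nat

theorem iteratedDerivWithin_subset {𝕜 F : Type*} [NontriviallyNormedField 𝕜]
    [NormedAddCommGroup F] [NormedSpace 𝕜 F] {f : 𝕜 → F} {s t : Set 𝕜} {x : 𝕜} {n : ℕ}
    (st : s ⊆ t) (hs : UniqueDiffOn 𝕜 s) (ht : UniqueDiffOn 𝕜 t) (hf : ContDiffOn 𝕜 n f t)
    (hx : x ∈ s) : iteratedDerivWithin n f s x = iteratedDerivWithin n f t x := by
  simp only [iteratedDerivWithin_eq_iteratedFDerivWithin,
    iteratedFDerivWithin_subset st hs ht hf hx]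

theorem taylor_integral_remainder_truncated {f : ℝ → ℝ} {c d x : ℝ} {n : ℕ} (hn : n ≠ 0)
    (hcd : c < d) (hf : ContDiffOn ℝ (n + 1) f (Icc c d)) (hx : x ∈ Icc c d) :
    f x - taylorWithinEval f n (Icc c d) c x =
      ∫ t in c..d, max (x - t) 0 ^ n / n ! * iteratedDerivWithin (n + 1) f (Icc c d) t := by
  have hg : ContinuousOn (iteratedDerivWithin (n + 1) f (Icc c d)) (Icc c d) :=
    hf.continuousOn_iteratedDerivWithin le_rfl (uniqueDiffOn_Icc hcd)
  have hint : ∀ {u v}, u ≤ v → Icc u v ⊆ Icc c d → IntervalIntegrable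
      (fun t => max (x - t) 0 ^ n / n ! * iteratedDerivWithin (n + 1) f (Icc c d) t) volume u v :=
    fun huv hsub =>
      ((Continuous.continuousOn (by fun_prop)).mul (hg.mono hsub)).intervalIntegrable_of_Icc huv
  have htail : ∫ t in x..d, max (x - t) 0 ^ n / n ! * iteratedDerivWithin (n + 1) f (Icc c d) t
      = 0 := by
    refine (intervalIntegral.integral_congr fun t ht => ?_).trans intervalIntegral.integral_zero
    rw [uIcc_of_le hx.2] at ht
    simp [max_eq_right (sub_nonpos.2 ht.1), hn]
  rw [← intervalIntegral.integral_add_adjacent_intervals (hint hx.1 (Icc_subset_Icc le_rfl hx.2))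
    (hint hx.2 (Icc_subset_Icc hx.1 le_rfl)), htail, add_zero]
  rcases hx.1.eq_or_lt with rfl | hcx
  · simp [taylorWithinEval_self]
  have hsub : Icc c x ⊆ Icc c d := Icc_subset_Icc le_rfl hx.2
  have hder : ∀ k ≤ n + 1, ∀ t ∈ Icc c x,
      iteratedDerivWithin k f (Icc c x) t = iteratedDerivWithin k f (Icc c d) t :=
    fun k hk t ht => iteratedDerivWithin_subset hsub (uniqueDiffOn_Icc hcx) (uniqueDiffOn_Icc hcd)
      (hf.of_le (by exact_mod_cast hk)) ht
  have hTaylor :=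
    taylor_integral_remainder (x₀ := c) (x := x) (hf.mono (by rwa [uIcc_of_le hcx.le]))
  rw [uIcc_of_le hcx.le] at hTaylor
  have hP : taylorWithinEval f n (Icc c x) c x = taylorWithinEval f n (Icc c d) c x := by
    simp only [taylor_within_apply]
    exact Finset.sum_congr rfl fun k hk => by
      rw [hder k (by simp at hk; omega) c (left_mem_Icc.2 hcx.le)]
  rw [← hP, hTaylor]
  refine intervalIntegral.integral_congr fun t ht => ?_
  rw [uIcc_of_le hcx.le] at ht
  simp only [smul_eq_mul, max_eq_left (sub_nonneg.2 ht.2), hder (n + 1) le_rfl t ht]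

theorem integral_max_pow {a b : ℝ} {n : ℕ} (hn : n ≠ 0) (ha : a ≤ 0) (hb : 0 ≤ b) :
    ∫ y in a..b, max y 0 ^ n = b ^ (n + 1) / (n + 1) := by
  have hint : ∀ u v : ℝ, IntervalIntegrable (fun y : ℝ => max y 0 ^ n) volume u v :=
    fun u v => (by fun_prop : Continuous _).intervalIntegrable u v
  rw [← intervalIntegral.integral_add_adjacent_intervals (hint a 0) (hint 0 b)]
  have hneg : ∫ y in a..0, max y 0 ^ n = 0 := by
    refine (intervalIntegral.integral_congr fun y hy => ?_).trans intervalIntegral.integral_zero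
    rw [uIcc_of_le ha] at hy
    simp [max_eq_right hy.2, hn]
  have hpos : ∫ y in (0 : ℝ)..b, max y 0 ^ n = ∫ y in (0 : ℝ)..b, y ^ n := by
    refine intervalIntegral.integral_congr fun y hy => ?_
    rw [uIcc_of_le hb] at hy
    simp [max_eq_left hy.1]
  rw [hneg, hpos, integral_pow]
  simp [hn]

theorem five_mul_mul_max_pow_five_le (h τ : ℝ) :
    5 * h * max (τ - (5 - Real.sqrt 15) / 10 * h) 0 ^ 5 ≤ 3 * τ ^ 6 := by
  have hs : Real.sqrt 15 ^ 2 = 15 := Real.sq_sqrt (by norm_num)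
  have hs0 : 0 ≤ Real.sqrt 15 := Real.sqrt_nonneg 15
  set α := (5 - Real.sqrt 15) / 10 with hα
  have hα0 : 0 < α := by nlinarith
  have hτ6 : 0 ≤ τ ^ 6 := by positivity
  rcases le_total (τ - α * h) 0 with hu | hu
  · rw [max_eq_right hu, zero_pow (by norm_num), mul_zero]; positivity
  rw [max_eq_left hu]
  set u := τ - α * h with hu_def
  rcases lt_or_ge h 0 with hh | hh
  · nlinarith [mul_nonpos_of_nonpos_of_nonneg hh.le (pow_nonneg hu 5)]
  have huτ : u ≤ τ := by nlinarith
  -- `3125 τ⁶ - 46656 (τ - u) u⁵ = (6u - 5τ)² q(u, τ)` with `q` having nonnegative coefficients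
  have hamgm : 46656 * (τ - u) * u ^ 5 ≤ 3125 * τ ^ 6 := by
    have hq : 0 ≤ 1296 * u ^ 4 + 864 * u ^ 3 * τ + 540 * u ^ 2 * τ ^ 2 + 300 * u * τ ^ 3
        + 125 * τ ^ 4 := by
      have : 0 ≤ τ := hu.trans huτ
      positivity
    nlinarith [mul_nonneg (sq_nonneg (6 * u - 5 * τ)) hq]
  have hα_bound : 15625 / 46656 ≤ 3 * α := by nlinarith
  refine le_of_mul_le_mul_left ?_ hα0
  calc α * (5 * h * u ^ 5) = 5 * (τ - u) * u ^ 5 := by rw [hu_def]; ring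
    _ ≤ 15625 / 46656 * τ ^ 6 := by linarith
    _ ≤ α * (3 * τ ^ 6) := by nlinarith

section GaussError

variable {f g : ℝ → ℝ} {c d t : ℝ}

noncomputable def gaussError (f : ℝ → ℝ) (c d : ℝ) : ℝ := (∫ x in c..d, f x) - gaussQ f c d

theorem gaussQ_congr (hcd : c ≤ d) (hfg : EqOn f g (Icc c d)) :
    gaussQ f c d = gaussQ g c d := by
  have hs : Real.sqrt 15 < 5 := by
    rw [Real.sqrt_lt' (by norm_num)]; norm_num
  have hs0 : 0 ≤ Real.sqrt 15 := Real.sqrt_nonneg 15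
  have hnode : ∀ {w : ℝ}, 0 ≤ w → w ≤ 1 → (1 - w) * c + w * d ∈ Icc c d := fun h0 h1 =>
    convex_Icc c d (left_mem_Icc.2 hcd) (right_mem_Icc.2 hcd) (by linarith) h0 (by ring)
  have h1 : (5 + Real.sqrt 15) / 10 * c + (5 - Real.sqrt 15) / 10 * d ∈ Icc c d := by
    convert hnode (w := (5 - Real.sqrt 15) / 10) (by linarith) (by linarith) using 2; ring
  have h3 : (5 - Real.sqrt 15) / 10 * c + (5 + Real.sqrt 15) / 10 * d ∈ Icc c d := by
    convert hnode (w := (5 + Real.sqrt 15) / 10) (by positivity) (by linarith) using 2; ring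
  have h2 : (c + d) / 2 ∈ Icc c d := by
    convert hnode (w := 1 / 2) (by norm_num) (by norm_num) using 1; ring
  rw [gaussQ, gaussQ, hfg h1, hfg h2, hfg h3]

theorem gaussError_congr (hcd : c ≤ d) (hfg : EqOn f g (Icc c d)) :
    gaussError f c d = gaussError g c d := by
  rw [gaussError, gaussError, gaussQ_congr hcd hfg,
    intervalIntegral.integral_congr (by rwa [uIcc_of_le hcd])]

theorem gaussError_sub (hf : IntervalIntegrable f volume c d)
    (hg : IntervalIntegrable g volume c d) :
    gaussError (fun x => f x - g x) c d = gaussError f c d - gaussError g c d := by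
  simp only [gaussError, gaussQ, intervalIntegral.integral_sub hf hg]
  ring

theorem gaussError_sum {ι : Type*} (s : Finset ι) {F : ι → ℝ → ℝ}
    (hF : ∀ i ∈ s, IntervalIntegrable (F i) volume c d) :
    gaussError (fun x => ∑ i ∈ s, F i x) c d = ∑ i ∈ s, gaussError (F i) c d := by
  simp only [gaussError, intervalIntegral.integral_finsetSum hF, Finset.sum_sub_distrib]
  simp only [gaussQ, Finset.sum_add_distrib, ← Finset.mul_sum]

theorem gaussError_mul_sub_pow (r p : ℝ) {k : ℕ} (hk : k ≤ 5) :
    gaussError (fun x => r * (x - p) ^ k) c d = 0 := by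
  have hs : Real.sqrt 15 ^ 2 = 15 := Real.sq_sqrt (by norm_num)
  rw [gaussError, intervalIntegral.integral_const_mul,
    intervalIntegral.integral_comp_sub_right (fun x => x ^ k), integral_pow, gaussQ]
  generalize Real.sqrt 15 = s at hs
  interval_cases k <;> grind

theorem gaussError_taylorWithinEval (s : Set ℝ) (p : ℝ) :
    gaussError (taylorWithinEval f 5 s p) c d = 0 := by
  have hP : taylorWithinEval f 5 s p =
      fun x => ∑ k ∈ Finset.range 6, iteratedDerivWithin k f s p / k ! * (x - p) ^ k := by
    ext x
    simp only [taylor_within_apply, smul_eq_mul]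
    exact Finset.sum_congr rfl fun k _ => by ring
  rw [hP, gaussError_sum _ fun k _ => (by fun_prop : Continuous _).intervalIntegrable c d]
  exact Finset.sum_eq_zero fun k hk =>
    gaussError_mul_sub_pow _ p (Nat.lt_succ_iff.1 (Finset.mem_range.1 hk))

theorem integral_gaussQ_comm {a b : ℝ} {k : ℝ → ℝ → ℝ}
    (hk : ∀ x, IntervalIntegrable (k x) volume a b) :
    ∫ t in a..b, gaussQ (fun x => k x t) c d = gaussQ (fun x => ∫ t in a..b, k x t) c d := by
  simp only [gaussQ]
  rw [intervalIntegral.integral_const_mul, intervalIntegral.integral_add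
      (((hk _).const_mul _).add ((hk _).const_mul _)) ((hk _).const_mul _),
    intervalIntegral.integral_add ((hk _).const_mul _) ((hk _).const_mul _)]
  simp only [intervalIntegral.integral_const_mul]

theorem gaussError_integral_mul {k : ℝ → ℝ → ℝ} (hk : Continuous (Function.uncurry k))
    (hg : ContinuousOn g (Icc c d)) (hcd : c ≤ d) :
    gaussError (fun x => ∫ t in c..d, k x t * g t) c d =
      ∫ t in c..d, gaussError (fun x => k x t) c d * g t := by
  have hg' : ContinuousOn g (uIcc c d) := by rwa [uIcc_of_le hcd]
  have hint : ∀ x, IntervalIntegrable (fun t => k x t * g t) volume c d := fun x =>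
    ((hk.comp (Continuous.prodMk_right x)).continuousOn.mul hg').intervalIntegrable
  have hswap :
      ∫ x in c..d, ∫ t in c..d, k x t * g t = ∫ t in c..d, (∫ x in c..d, k x t) * g t := by
    rw [intervalIntegral_intervalIntegral_swap]
    · simp only [intervalIntegral.integral_mul_const]
    · have hcont :
          ContinuousOn (Function.uncurry fun x t => k x t * g t) (Icc c d ×ˢ Icc c d) :=
        hk.continuousOn.mul (hg.comp continuous_snd.continuousOn fun _ hp => hp.2)
      refine (hcont.integrableOn_compact (isCompact_Icc.prod isCompact_Icc)).mono_set ?_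
      rw [uIoc_of_le hcd]
      exact prod_mono Ioc_subset_Icc_self Ioc_subset_Icc_self
  have hK : Continuous fun t => ∫ x in c..d, k x t :=
    intervalIntegral.continuous_parametric_intervalIntegral_of_continuous'
      (f := fun t x => k x t) (hk.comp continuous_swap) c d
  rw [gaussError, hswap, ← integral_gaussQ_comm hint, ← intervalIntegral.integral_sub]
  · refine intervalIntegral.integral_congr fun t _ => ?_
    simp only [gaussError, gaussQ]
    ring
  · exact (hK.continuousOn.mul hg').intervalIntegrable
  · exact ((((hint _).const_mul 5).add ((hint _).const_mul 8)).add
      ((hint _).const_mul 5)).const_mul _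

noncomputable def gaussPeanoKernel (c d t : ℝ) : ℝ :=
  gaussError (fun x => max (x - t) 0 ^ 5 / 120) c d

theorem continuous_gaussPeanoKernel (c d : ℝ) : Continuous (gaussPeanoKernel c d) := by
  unfold gaussPeanoKernel gaussError gaussQ
  fun_prop

theorem gaussPeanoKernel_eq_right (ht : t ∈ Icc c d) :
    gaussPeanoKernel c d t =
      (d - t) ^ 6 / 720 - gaussQ (fun x => max (x - t) 0 ^ 5 / 120) c d := by
  rw [gaussPeanoKernel, gaussError, intervalIntegral.integral_div,
    intervalIntegral.integral_comp_sub_right (fun y => max y 0 ^ 5),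
    integral_max_pow (by norm_num) (by linarith [ht.1]) (by linarith [ht.2])]
  ring

theorem gaussPeanoKernel_eq_left (ht : t ∈ Icc c d) :
    gaussPeanoKernel c d t =
      (t - c) ^ 6 / 720 - gaussQ (fun x => max (t - x) 0 ^ 5 / 120) c d := by
  have hodd : ∀ x, max (x - t) 0 ^ 5 / 120 - 120⁻¹ * (x - t) ^ 5 = max (t - x) 0 ^ 5 / 120 := by
    intro x
    rcases le_total x t with h | h
    · rw [max_eq_right (by linarith), max_eq_left (by linarith)]; ring
    · rw [max_eq_left (by linarith), max_eq_right (by linarith)]; ring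
  have hint : ∀ F : ℝ → ℝ, Continuous F → IntervalIntegrable F volume c d :=
    fun F hF => hF.intervalIntegrable c d
  calc gaussPeanoKernel c d t
      = gaussError (fun x => max (x - t) 0 ^ 5 / 120 - 120⁻¹ * (x - t) ^ 5) c d := by
        rw [gaussError_sub (hint _ (by fun_prop)) (hint _ (by fun_prop)),
          gaussError_mul_sub_pow _ _ le_rfl, sub_zero, gaussPeanoKernel]
    _ = _ := by
        simp only [hodd, gaussError, intervalIntegral.integral_div,
          intervalIntegral.integral_comp_sub_left (fun y => max y 0 ^ 5)]
        rw [integral_max_pow (by norm_num) (by linarith [ht.2]) (by linarith [ht.1])]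
        ring

theorem gaussPeanoKernel_nonneg (ht : t ∈ Icc c d) : 0 ≤ gaussPeanoKernel c d t := by
  have hs0 : 0 ≤ Real.sqrt 15 := Real.sqrt_nonneg 15
  have hcd : c ≤ d := ht.1.trans ht.2
  -- Left of the midpoint only the node `x₁` can lie below `t`, so the left form of the kernel is
  -- `(t - c)⁶ / 720 - (d - c) (t - x₁)₊⁵ / 432`; the right half is the mirror image.
  rcases le_total t ((c + d) / 2) with h | h
  · have key := five_mul_mul_max_pow_five_le (d - c) (t - c)
    rw [gaussPeanoKernel_eq_left ht, gaussQ, max_eq_right (a := t - (c + d) / 2) (by linarith),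
      max_eq_right (a := t - _) (show t - ((5 - Real.sqrt 15) / 10 * c
        + (5 + Real.sqrt 15) / 10 * d) ≤ 0 by nlinarith),
      show t - ((5 + Real.sqrt 15) / 10 * c + (5 - Real.sqrt 15) / 10 * d)
        = t - c - (5 - Real.sqrt 15) / 10 * (d - c) by ring]
    nlinarith
  · have key := five_mul_mul_max_pow_five_le (d - c) (d - t)
    rw [gaussPeanoKernel_eq_right ht, gaussQ, max_eq_right (a := (c + d) / 2 - t) (by linarith),
      max_eq_right (a := _ - t) (show (5 + Real.sqrt 15) / 10 * c
        + (5 - Real.sqrt 15) / 10 * d - t ≤ 0 by nlinarith),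
      show (5 - Real.sqrt 15) / 10 * c + (5 + Real.sqrt 15) / 10 * d - t
        = d - t - (5 - Real.sqrt 15) / 10 * (d - c) by ring]
    nlinarith

theorem integral_gaussPeanoKernel (hcd : c ≤ d) :
    ∫ t in c..d, gaussPeanoKernel c d t = (d - c) ^ 7 / 2016000 := by
  have hk : ∀ x, IntervalIntegrable (fun t => max (x - t) 0 ^ 5 / 120) volume c d :=
    fun x => (by fun_prop : Continuous _).intervalIntegrable c d
  have hs : Real.sqrt 15 ^ 2 = 15 := Real.sq_sqrt (by norm_num)
  calc ∫ t in c..d, gaussPeanoKernel c d t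
      = ∫ t in c..d, ((d - t) ^ 6 / 720 - gaussQ (fun x => max (x - t) 0 ^ 5 / 120) c d) :=
        intervalIntegral.integral_congr fun t ht =>
          gaussPeanoKernel_eq_right (by rwa [uIcc_of_le hcd] at ht)
    _ = (d - c) ^ 7 / 5040 - gaussQ (fun x => ∫ t in c..d, max (x - t) 0 ^ 5 / 120) c d := by
        rw [intervalIntegral.integral_sub ((by fun_prop : Continuous _).intervalIntegrable c d)
          (by simp only [gaussQ]; exact (by fun_prop : Continuous _).intervalIntegrable c d),
          integral_gaussQ_comm hk, intervalIntegral.integral_div,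
          intervalIntegral.integral_comp_sub_left (fun y => y ^ 6), integral_pow]
        ring
    _ = (d - c) ^ 7 / 5040 - gaussQ (fun x => (x - c) ^ 6 / 720) c d := by
        congr 1
        refine gaussQ_congr hcd fun x hx => ?_
        rw [intervalIntegral.integral_div,
          intervalIntegral.integral_comp_sub_left (fun y => max y 0 ^ 5),
          integral_max_pow (by norm_num) (by linarith [hx.2]) (by linarith [hx.1])]
        ring
    _ = (d - c) ^ 7 / 2016000 := by
        rw [gaussQ]
        generalize Real.sqrt 15 = s at hs
        grind

theorem gaussError_eq_integral_gaussPeanoKernel (hcd : c < d)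
    (hf : ContDiffOn ℝ 6 f (Icc c d)) :
    gaussError f c d =
      ∫ t in c..d, gaussPeanoKernel c d t * iteratedDerivWithin 6 f (Icc c d) t := by
  set P := taylorWithinEval f 5 (Icc c d) c
  have hfi : IntervalIntegrable f volume c d := hf.continuousOn.intervalIntegrable_of_Icc hcd.le
  have hPi : IntervalIntegrable P volume c d := by
    refine Continuous.intervalIntegrable (u := fun x => P x) ?_ c d
    simp only [P, taylor_within_apply]
    fun_prop
  calc gaussError f c d = gaussError (fun x => f x - P x) c d := by
        rw [gaussError_sub hfi hPi, gaussError_taylorWithinEval, sub_zero]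
    _ = gaussError (fun x => ∫ t in c..d,
          max (x - t) 0 ^ 5 / 120 * iteratedDerivWithin 6 f (Icc c d) t) c d :=
        gaussError_congr hcd.le fun x hx =>
          taylor_integral_remainder_truncated (n := 5) (by norm_num) hcd hf hx
    _ = _ := gaussError_integral_mul (by fun_prop)
          (hf.continuousOn_iteratedDerivWithin le_rfl (uniqueDiffOn_Icc hcd)) hcd.le

theorem abs_gaussError_le (hcd : c < d) (hf : ContDiffOn ℝ 6 f (Icc c d)) {M : ℝ}
    (hM : ∀ t ∈ Icc c d, |iteratedDerivWithin 6 f (Icc c d) t| ≤ M) :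
    |gaussError f c d| ≤ (d - c) ^ 7 / 2016000 * M := by
  rw [gaussError_eq_integral_gaussPeanoKernel hcd hf, ← integral_gaussPeanoKernel hcd.le,
    ← intervalIntegral.integral_mul_const, ← Real.norm_eq_abs]
  refine intervalIntegral.norm_integral_le_of_norm_le hcd.le (ae_of_all _ fun t ht => ?_)
    (((continuous_gaussPeanoKernel c d).mul continuous_const).intervalIntegrable c d)
  have hK := gaussPeanoKernel_nonneg (Ioc_subset_Icc_self ht)
  rw [Real.norm_eq_abs, abs_mul, abs_of_nonneg hK]
  exact mul_le_mul_of_nonneg_left (hM t (Ioc_subset_Icc_self ht)) hK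

end GaussError

section Composite

variable {f : ℝ → ℝ} {a b : ℝ} {n : ℕ}

theorem add_mul_div_mem_Icc (hab : a ≤ b) {k : ℕ} (hk : k ≤ n) :
    a + k * (b - a) / n ∈ Icc a b := by
  have hba : 0 ≤ b - a := sub_nonneg.2 hab
  refine ⟨le_add_of_nonneg_right (by positivity), ?_⟩
  rcases n.eq_zero_or_pos with rfl | hn
  · simpa using hab
  have : k * (b - a) / n ≤ b - a := by
    rw [div_le_iff₀ (by positivity)]
    exact mul_comm (b - a) n ▸ mul_le_mul_of_nonneg_right (by exact_mod_cast hk) hba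
  linarith

theorem integral_sub_gaussC_eq_sum (hab : a ≤ b) (hf : ContinuousOn f (Icc a b)) (hn : n ≠ 0) :
    (∫ x in a..b, f x) - gaussC n f a b = ∑ k ∈ Finset.range n,
      gaussError f (a + k * (b - a) / n) (a + (k + 1) * (b - a) / n) := by
  set x : ℕ → ℝ := fun k => a + k * (b - a) / n with hx
  have hsucc : ∀ k : ℕ, a + (k + 1) * (b - a) / n = x (k + 1) := by simp [hx]
  have hint : ∀ k < n, IntervalIntegrable f volume (x k) (x (k + 1)) := fun k hk =>
    (hf.mono (uIcc_subset_Icc (add_mul_div_mem_Icc hab hk.le)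
      (add_mul_div_mem_Icc hab hk))).intervalIntegrable
  have hx0 : x 0 = a := by simp [hx]
  have hxn : x n = b := by simp [hx, hn]
  simp only [gaussError, gaussC, hsucc, Finset.sum_sub_distrib]
  rw [intervalIntegral.sum_integral_adjacent_intervals hint, hx0, hxn]

theorem abs_integral_sub_gaussC_le (hab : a < b) (hf : ContDiffOn ℝ 6 f (Icc a b)) {M : ℝ}
    (hM : ∀ t ∈ Icc a b, |iteratedDerivWithin 6 f (Icc a b) t| ≤ M) (hn : n ≠ 0) :
    |(∫ x in a..b, f x) - gaussC n f a b| ≤ (b - a) ^ 7 / (2016000 * n ^ 6) * M := by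
  have hn' : (0 : ℝ) < n := by positivity
  have hpiece : ∀ k < n, |gaussError f (a + k * (b - a) / n) (a + (k + 1) * (b - a) / n)| ≤
      ((b - a) / n) ^ 7 / 2016000 * M := by
    intro k hk
    have hsub := Icc_subset_Icc (add_mul_div_mem_Icc hab.le hk.le).1
      (add_mul_div_mem_Icc hab.le hk).2
    push_cast at hsub
    have hlen : a + (k + 1) * (b - a) / n - (a + k * (b - a) / n) = (b - a) / n := by ring
    have hlt : a + k * (b - a) / n < a + (k + 1) * (b - a) / n := by
      linarith [div_pos (sub_pos.2 hab) hn']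
    rw [← hlen]
    refine abs_gaussError_le hlt (hf.mono hsub) fun t ht => ?_
    rw [iteratedDerivWithin_subset hsub (uniqueDiffOn_Icc hlt) (uniqueDiffOn_Icc hab) hf ht]
    exact hM t (hsub ht)
  rw [integral_sub_gaussC_eq_sum hab.le hf.continuousOn hn]
  calc _ ≤ ∑ k ∈ Finset.range n,
        |gaussError f (a + k * (b - a) / n) (a + (k + 1) * (b - a) / n)| :=
        Finset.abs_sum_le_sum_abs _ _
    _ ≤ ∑ _k ∈ Finset.range n, ((b - a) / n) ^ 7 / 2016000 * M :=
        Finset.sum_le_sum fun k hk => hpiece k (Finset.mem_range.1 hk)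
    _ = (b - a) ^ 7 / (2016000 * n ^ 6) * M := by
        rw [Finset.sum_const, Finset.card_range, nsmul_eq_mul]
        field_simp

end Composite

theorem composite_gauss_error (a b : ℝ) (hab : a < b) (f : ℝ → ℝ)
    (hf : ContDiffOn ℝ 6 f (Set.Icc a b)) (n : ℕ) (hn : 1 ≤ n) :
    |(∫ x in a..b, f x) - gaussC n f a b| ≤
      (b - a) ^ 7 / (2016000 * n ^ 6) * ⨆ x : Set.Icc a b, |iteratedDerivWithin 6 f (Set.Icc a b) x| := by
  have hg : ContinuousOn (iteratedDerivWithin 6 f (Icc a b)) (Icc a b) :=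
    hf.continuousOn_iteratedDerivWithin le_rfl (uniqueDiffOn_Icc hab)
  have hbdd : BddAbove (range fun x : Icc a b => |iteratedDerivWithin 6 f (Icc a b) x|) := by
    simpa only [image_eq_range] using isCompact_Icc.bddAbove_image hg.abs
  exact abs_integral_sub_gaussC_le hab hf (fun t ht => le_ciSup hbdd ⟨t, ht⟩) (by omega)
end
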